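/- arXiv:1804.09338 — 3 statements merged into one kernel-verified Lean document; each statement's English description precedes it below -/
import Mathlib

section
/- Let T = (T₁, r₁) ∘ (T₂, r₂) be the composition of two disjoint rooted trees joined by the edge r₁r₂. Suppose f₁ is an IR2DF of T₁ with f₁(r₁) = 1, and f₂ : V(T₂) → {0,1,2} satisfies f₂(r₂) = 0, f₂(N_{T₂}[r₂]) = 1, f₂ is not an IR2DF of T₂, but f₂ restricted to T₂ − r₂ is an IR2DF of T₂ − r₂. Then the combined function f (with f|_{T₁} = f₁, f|_{T₂} = f₂) is an IR2DF of T with f(r₁) = 1. -/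
open scoped Classical

open Finset

noncomputable def nbrSum {V : Type*} [Fintype V] (G : SimpleGraph V) (f : V → ℕ) (v : V) : ℕ :=
  ∑ u ∈ Finset.univ.filter (fun u => G.Adj v u), f u

/-- `f(N[v])`: sum of `f` over the closed neighborhood of `v`. -/
noncomputable def closedNbrSum {V : Type*} [Fintype V] (G : SimpleGraph V) (f : V → ℕ) (v : V) : ℕ :=
  f v + nbrSum G f v

def IsR2DF {V : Type*} [Fintype V] (G : SimpleGraph V) (f : V → ℕ) : Prop :=
  (∀ v, f v ≤ 2) ∧ ∀ v, f v = 0 → 2 ≤ nbrSum G f v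

/-- `f` is an independent Roman {2}-dominating function on `G`. -/
def IsIR2DF {V : Type*} [Fintype V] (G : SimpleGraph V) (f : V → ℕ) : Prop :=
  IsR2DF G f ∧ ∀ ⦃u v : V⦄, G.Adj u v → f u = 0 ∨ f v = 0

/-- One-directional relation generating the composition `(T₁,r₁) ∘ (T₂,r₂)`. -/
def treeCompRel {V₁ V₂ : Type*} (T₁ : SimpleGraph V₁) (T₂ : SimpleGraph V₂) (r₁ : V₁) (r₂ : V₂) :
    (V₁ ⊕ V₂) → (V₁ ⊕ V₂) → Prop
  | .inl a, .inl b => T₁.Adj a b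
  | .inr a, .inr b => T₂.Adj a b
  | .inl a, .inr b => a = r₁ ∧ b = r₂
  | .inr _, .inl _ => False

/-- The composition `(T₁,r₁) ∘ (T₂,r₂)`: disjoint union plus the edge `r₁r₂`. -/
def compGraph {V₁ V₂ : Type*} (T₁ : SimpleGraph V₁) (T₂ : SimpleGraph V₂) (r₁ : V₁) (r₂ : V₂) :
    SimpleGraph (V₁ ⊕ V₂) :=
  SimpleGraph.fromRel (treeCompRel T₁ T₂ r₁ r₂)

/-- The graph `G - r` obtained by deleting the vertex `r`. -/
def delVert {V : Type*} (G : SimpleGraph V) (r : V) : SimpleGraph {v : V // v ≠ r} :=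
  SimpleGraph.induce {v : V | v ≠ r} G


/-! Deleting `r₂` loses nothing at the other vertices of `T₂`: their domination and independence
already hold in `T₂ - r₂`. The only new requirement is at `r₂` itself, where `f₂(r₂) = 0` and
`f₂(N(r₂)) = 1`; the new edge supplies the missing unit `f₁(r₁) = 1`, and it is independent
because `f₂(r₂) = 0`. -/

section CompGraph

variable {V₁ V₂ : Type*} (T₁ : SimpleGraph V₁) (T₂ : SimpleGraph V₂) (r₁ : V₁) (r₂ : V₂)

@[simp]
lemma compGraph_adj_inl_inl (a b : V₁) :
    (compGraph T₁ T₂ r₁ r₂).Adj (.inl a) (.inl b) ↔ T₁.Adj a b := by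
  simp only [compGraph, treeCompRel, SimpleGraph.fromRel_adj, ne_eq, Sum.inl.injEq]
  exact ⟨fun ⟨_, h⟩ => h.elim id (·.symm), fun h => ⟨h.ne, .inl h⟩⟩

@[simp]
lemma compGraph_adj_inr_inr (a b : V₂) :
    (compGraph T₁ T₂ r₁ r₂).Adj (.inr a) (.inr b) ↔ T₂.Adj a b := by
  simp only [compGraph, treeCompRel, SimpleGraph.fromRel_adj, ne_eq, Sum.inr.injEq]
  exact ⟨fun ⟨_, h⟩ => h.elim id (·.symm), fun h => ⟨h.ne, .inl h⟩⟩

@[simp]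
lemma compGraph_adj_inl_inr (a : V₁) (b : V₂) :
    (compGraph T₁ T₂ r₁ r₂).Adj (.inl a) (.inr b) ↔ a = r₁ ∧ b = r₂ := by
  simp [compGraph, treeCompRel]

@[simp]
lemma compGraph_adj_inr_inl (a : V₂) (b : V₁) :
    (compGraph T₁ T₂ r₁ r₂).Adj (.inr a) (.inl b) ↔ b = r₁ ∧ a = r₂ := by
  simp [compGraph, treeCompRel]

variable [Fintype V₁] [Fintype V₂] (f₁ : V₁ → ℕ) (f₂ : V₂ → ℕ)

lemma nbrSum_compGraph_inl (a : V₁) :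
    nbrSum (compGraph T₁ T₂ r₁ r₂) (Sum.elim f₁ f₂) (.inl a) =
      nbrSum T₁ f₁ a + if a = r₁ then f₂ r₂ else 0 := by
  simp only [nbrSum, Finset.sum_filter, Fintype.sum_sum_type, compGraph_adj_inl_inl,
    compGraph_adj_inl_inr, Sum.elim_inl, Sum.elim_inr]
  split_ifs with h <;> simp [h]

lemma nbrSum_compGraph_inr (b : V₂) :
    nbrSum (compGraph T₁ T₂ r₁ r₂) (Sum.elim f₁ f₂) (.inr b) =
      (if b = r₂ then f₁ r₁ else 0) + nbrSum T₂ f₂ b := by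
  simp only [nbrSum, Finset.sum_filter, Fintype.sum_sum_type, compGraph_adj_inr_inr,
    compGraph_adj_inr_inl, Sum.elim_inl, Sum.elim_inr]
  split_ifs with h <;> simp [h]

end CompGraph

section DelVert

variable {V : Type*} (G : SimpleGraph V) (r : V)

lemma nbrSum_delVert_le [Fintype V] [Fintype {v : V // v ≠ r}] (f : V → ℕ)
    (v : {v : V // v ≠ r}) :
    nbrSum (delVert G r) (fun u => f u.1) v ≤ nbrSum G f v.1 := by
  refine (Finset.sum_map _ (Function.Embedding.subtype _) f).symm.trans_le
    (Finset.sum_le_sum_of_subset fun u => ?_)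
  simp only [Finset.mem_map, Finset.mem_filter, Finset.mem_univ, true_and]
  rintro ⟨u, hu, rfl⟩
  exact hu

lemma eq_zero_or_eq_zero_of_adj_of_delVert {f : V → ℕ} (hr : f r = 0)
    (h : ∀ ⦃u v : {v : V // v ≠ r}⦄, (delVert G r).Adj u v → f u = 0 ∨ f v = 0)
    {u v : V} (huv : G.Adj u v) : f u = 0 ∨ f v = 0 := by
  by_cases hu : u = r
  · exact .inl (hu ▸ hr)
  by_cases hv : v = r
  · exact .inr (hv ▸ hr)
  exact h (u := ⟨u, hu⟩) (v := ⟨v, hv⟩) huv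

end DelVert

theorem IsIR2DF.compGraph {V₁ V₂ : Type*} [Fintype V₁] [Fintype V₂]
    {T₁ : SimpleGraph V₁} {T₂ : SimpleGraph V₂} {r₁ : V₁} {r₂ : V₂} [Fintype {v : V₂ // v ≠ r₂}]
    {f₁ : V₁ → ℕ} {f₂ : V₂ → ℕ}
    (hf₁ : IsIR2DF T₁ f₁) (hr₂ : f₂ r₂ = 0) (hf₂ : IsIR2DF (delVert T₂ r₂) (fun v => f₂ v.1))
    (hroot : 2 ≤ f₁ r₁ + nbrSum T₂ f₂ r₂) :
    IsIR2DF (compGraph T₁ T₂ r₁ r₂) (Sum.elim f₁ f₂) := by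
  refine ⟨⟨?_, ?_⟩, ?_⟩
  · rintro (a | b)
    · exact hf₁.1.1 a
    by_cases hb : b = r₂
    · simp [hb, hr₂]
    · exact hf₂.1.1 ⟨b, hb⟩
  · rintro (a | b) h
    · rw [nbrSum_compGraph_inl]
      exact (hf₁.1.2 a h).trans (Nat.le_add_right _ _)
    rw [nbrSum_compGraph_inr]
    by_cases hb : b = r₂
    · simpa [hb] using hroot
    · rw [if_neg hb, zero_add]
      exact (hf₂.1.2 ⟨b, hb⟩ h).trans (nbrSum_delVert_le T₂ r₂ f₂ ⟨b, hb⟩)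
  · rintro (a | a) (b | b) hab <;> simp only [compGraph_adj_inl_inl, compGraph_adj_inl_inr,
      compGraph_adj_inr_inl, compGraph_adj_inr_inr] at hab
    · exact hf₁.2 hab
    · exact .inr (by simp [hab.2, hr₂])
    · exact .inl (by simp [hab.2, hr₂])
    · exact eq_zero_or_eq_zero_of_adj_of_delVert T₂ r₂ hr₂ hf₂.2 hab

theorem stmt_6_general {V₁ V₂ : Type*} [Fintype V₁] [Fintype V₂] [DecidableEq V₂]
    (T₁ : SimpleGraph V₁) (T₂ : SimpleGraph V₂)
    (r₁ : V₁) (r₂ : V₂)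
    (f₁ : V₁ → ℕ) (f₂ : V₂ → ℕ)
    (hf₁ : IsIR2DF T₁ f₁) (hr₁ : f₁ r₁ = 1)
    (hr₂ : f₂ r₂ = 0)
    (hN : closedNbrSum T₂ f₂ r₂ = 1)
    (hdel : IsIR2DF (delVert T₂ r₂) (fun v => f₂ v.1)) :
    IsIR2DF (compGraph T₁ T₂ r₁ r₂) (Sum.elim f₁ f₂) ∧
      Sum.elim f₁ f₂ (Sum.inl r₁) = 1 := by
  have hroot : 2 ≤ f₁ r₁ + nbrSum T₂ f₂ r₂ := by
    rw [closedNbrSum, hr₂] at hN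
    omega
  exact ⟨hf₁.compGraph hr₂ hdel hroot, hr₁⟩

theorem stmt_6 {V₁ V₂ : Type*} [Fintype V₁] [Fintype V₂] [DecidableEq V₁] [DecidableEq V₂]
    (T₁ : SimpleGraph V₁) (T₂ : SimpleGraph V₂) (hT₁ : T₁.IsTree) (hT₂ : T₂.IsTree)
    (r₁ : V₁) (r₂ : V₂)
    (f₁ : V₁ → ℕ) (f₂ : V₂ → ℕ)
    (hf₁ : IsIR2DF T₁ f₁) (hr₁ : f₁ r₁ = 1)
    (hb₂ : ∀ v, f₂ v ≤ 2) (hr₂ : f₂ r₂ = 0)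
    (hN : closedNbrSum T₂ f₂ r₂ = 1)
    (hnot : ¬ IsIR2DF T₂ f₂)
    (hdel : IsIR2DF (delVert T₂ r₂) (fun v => f₂ v.1)) :
    IsIR2DF (compGraph T₁ T₂ r₁ r₂) (Sum.elim f₁ f₂) ∧
      Sum.elim f₁ f₂ (Sum.inl r₁) = 1 :=
  stmt_6_general T₁ T₂ r₁ r₂ f₁ f₂ hf₁ hr₁ hr₂ hN hdel
end

section
/- Let T = (T₁, r₁) ∘ (T₂, r₂) with root r = r₁. If f is an IR2DF of T with f(r) = 0 and f(r₂) = 1, then f|_{T₂} is an IR2DF of T₂, and either f|_{T₁} is an IR2DF of T₁, or f|_{T₁} is not an IR2DF of T₁ but f(N_{T₁}[r₁]) = 1 and f restricted to T₁ − r₁ is an IR2DF of T₁ − r₁. -/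
open scoped Classical

open Finset

/-!
Restricting `f` along the inclusions of `T₂`, `T₁` and `T₁ - r₁` into `T` preserves independence,
and preserves the Roman `{2}`-condition at every vertex whose neighbours outside the subgraph all
have weight `0`. Because `f(r₁) = 0`, this covers every vertex except `r₁` in `T₁`, whose only lost
neighbour is `r₂`, of weight `1`. So `f(N_{T₁}(r₁))` is either at least `2`, and `f|_{T₁}` is an
IR2DF, or exactly `1`, which gives `f(N_{T₁}[r₁]) = 1`.
-/

section Comap

variable {V W : Type*} [Fintype V] [Fintype W] {G : SimpleGraph V} {H : SimpleGraph W}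

lemma nbrSum_comap_add (φ : H ↪g G) (f : V → ℕ) (w : W) :
    nbrSum G f (φ w) = nbrSum H (f ∘ φ) w +
      ∑ u ∈ univ.filter (fun u => G.Adj (φ w) u ∧ u ∉ Set.range φ), f u := by
  have hrange : (univ.filter (fun u => G.Adj (φ w) u)).filter (· ∈ Set.range φ) =
      (univ.filter (H.Adj w)).map φ.toEmbedding := by
    ext u
    simp only [mem_filter, mem_univ, true_and, Set.mem_range, mem_map,
      RelEmbedding.coe_toEmbedding]
    constructor
    · rintro ⟨hadj, x, rfl⟩
      exact ⟨x, φ.map_adj_iff.mp hadj, rfl⟩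
    · rintro ⟨x, hadj, rfl⟩
      exact ⟨φ.map_adj_iff.mpr hadj, x, rfl⟩
  rw [nbrSum, nbrSum, ← sum_filter_add_sum_filter_not _ (· ∈ Set.range φ), hrange, sum_map,
    filter_filter]
  rfl

lemma nbrSum_comap_of_outer_eq_zero (φ : H ↪g G) {f : V → ℕ} {w : W}
    (hout : ∀ u, G.Adj (φ w) u → u ∉ Set.range φ → f u = 0) :
    nbrSum H (f ∘ φ) w = nbrSum G f (φ w) := by
  rw [nbrSum_comap_add, sum_eq_zero fun u hu => (mem_filter.mp hu).2.elim (hout u), add_zero]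

lemma IsIR2DF.comap {f : V → ℕ} (hf : IsIR2DF G f) (φ : H →g G)
    (hdom : ∀ w, f (φ w) = 0 → 2 ≤ nbrSum H (f ∘ φ) w) : IsIR2DF H (f ∘ φ) :=
  ⟨⟨fun w => hf.1.1 (φ w), hdom⟩, fun _ _ hadj => hf.2 (φ.map_adj hadj)⟩

lemma IsIR2DF.comap_of_outer_eq_zero {f : V → ℕ} (hf : IsIR2DF G f) (φ : H ↪g G)
    (hout : ∀ w, f (φ w) = 0 → ∀ u, G.Adj (φ w) u → u ∉ Set.range φ → f u = 0) :
    IsIR2DF H (f ∘ φ) :=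
  hf.comap φ.toHom fun w hw => nbrSum_comap_of_outer_eq_zero φ (hout w hw) ▸ hf.1.2 (φ w) hw

end Comap

namespace compGraph

variable {V₁ V₂ : Type*} {T₁ : SimpleGraph V₁} {T₂ : SimpleGraph V₂} {r₁ : V₁} {r₂ : V₂}

@[simp]
lemma adj_inl_inl {a b : V₁} : (compGraph T₁ T₂ r₁ r₂).Adj (.inl a) (.inl b) ↔ T₁.Adj a b := by
  simp only [compGraph, SimpleGraph.fromRel_adj, treeCompRel, ne_eq, Sum.inl.injEq]
  exact ⟨fun h => h.2.elim id .symm, fun h => ⟨h.ne, .inl h⟩⟩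

@[simp]
lemma adj_inr_inr {a b : V₂} : (compGraph T₁ T₂ r₁ r₂).Adj (.inr a) (.inr b) ↔ T₂.Adj a b := by
  simp only [compGraph, SimpleGraph.fromRel_adj, treeCompRel, ne_eq, Sum.inr.injEq]
  exact ⟨fun h => h.2.elim id .symm, fun h => ⟨h.ne, .inl h⟩⟩

@[simp]
lemma adj_inl_inr {a : V₁} {b : V₂} :
    (compGraph T₁ T₂ r₁ r₂).Adj (.inl a) (.inr b) ↔ a = r₁ ∧ b = r₂ := by
  simp [compGraph, treeCompRel]

@[simp]
lemma adj_inr_inl {a : V₂} {b : V₁} :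
    (compGraph T₁ T₂ r₁ r₂).Adj (.inr a) (.inl b) ↔ b = r₁ ∧ a = r₂ := by
  rw [SimpleGraph.adj_comm, adj_inl_inr]

def inl : T₁ ↪g compGraph T₁ T₂ r₁ r₂ where
  toEmbedding := .inl
  map_rel_iff' := adj_inl_inl

def inr : T₂ ↪g compGraph T₁ T₂ r₁ r₂ where
  toEmbedding := .inr
  map_rel_iff' := adj_inr_inr

@[simp]
lemma coe_inl : ⇑(inl : T₁ ↪g compGraph T₁ T₂ r₁ r₂) = Sum.inl := rfl

@[simp]
lemma coe_inr : ⇑(inr : T₂ ↪g compGraph T₁ T₂ r₁ r₂) = Sum.inr := rfl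

variable [Fintype V₁] [Fintype V₂]

lemma nbrSum_inl_root (f : V₁ ⊕ V₂ → ℕ) :
    nbrSum (compGraph T₁ T₂ r₁ r₂) f (.inl r₁) =
      nbrSum T₁ (fun v => f (.inl v)) r₁ + f (.inr r₂) := by
  calc nbrSum (compGraph T₁ T₂ r₁ r₂) f (.inl r₁)
      _ = _ := nbrSum_comap_add inl f r₁
      _ = _ := by
        rw [← sum_singleton f (.inr r₂)]
        congr 2
        ext (a | b) <;> simp

variable {f : V₁ ⊕ V₂ → ℕ}

lemma isIR2DF_restrict_inr (hf : IsIR2DF (compGraph T₁ T₂ r₁ r₂) f) (h0 : f (.inl r₁) = 0) :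
    IsIR2DF T₂ (fun v => f (.inr v)) :=
  hf.comap_of_outer_eq_zero inr <| by
    rintro w - (a | b) hadj hout
    · rw [(adj_inr_inl.mp hadj).1, h0]
    · exact absurd ⟨b, rfl⟩ hout

lemma isIR2DF_restrict_inl_of_two_le (hf : IsIR2DF (compGraph T₁ T₂ r₁ r₂) f)
    (h2 : 2 ≤ nbrSum T₁ (fun v => f (.inl v)) r₁) : IsIR2DF T₁ (fun v => f (.inl v)) :=
  hf.comap inl.toHom fun v hv => by
    by_cases hv₁ : v = r₁
    · exact hv₁ ▸ h2
    refine le_of_le_of_eq (hf.1.2 (.inl v) hv) (nbrSum_comap_of_outer_eq_zero inl ?_).symm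
    rintro (a | b) hadj hout
    · exact absurd ⟨a, rfl⟩ hout
    · exact absurd (adj_inl_inr.mp hadj).1 hv₁

lemma isIR2DF_restrict_delVert [DecidableEq V₁] (hf : IsIR2DF (compGraph T₁ T₂ r₁ r₂) f)
    (h0 : f (.inl r₁) = 0) : IsIR2DF (delVert T₁ r₁) (fun v => f (.inl v.1)) :=
  hf.comap_of_outer_eq_zero (inl.comp (SimpleGraph.Embedding.induce {v | v ≠ r₁})) <| by
    rintro v - (a | b) hadj hout
    · by_cases ha : a = r₁
      · rw [ha, h0]
      · exact absurd ⟨⟨a, ha⟩, rfl⟩ hout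
    · exact absurd (adj_inl_inr.mp hadj).1 v.2

end compGraph

theorem stmt_8_general {V₁ V₂ : Type*} [Fintype V₁] [Fintype V₂] [DecidableEq V₁]
    (T₁ : SimpleGraph V₁) (T₂ : SimpleGraph V₂)
    (r₁ : V₁) (r₂ : V₂)
    (f : V₁ ⊕ V₂ → ℕ) (hf : IsIR2DF (compGraph T₁ T₂ r₁ r₂) f)
    (h0 : f (Sum.inl r₁) = 0) (h1 : f (Sum.inr r₂) = 1) :
    IsIR2DF T₂ (fun v => f (Sum.inr v)) ∧
      (IsIR2DF T₁ (fun v => f (Sum.inl v)) ∨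
        (¬ IsIR2DF T₁ (fun v => f (Sum.inl v)) ∧
          closedNbrSum T₁ (fun v => f (Sum.inl v)) r₁ = 1 ∧
          IsIR2DF (delVert T₁ r₁) (fun v => f (Sum.inl v.1)))) := by
  refine ⟨compGraph.isIR2DF_restrict_inr hf h0, ?_⟩
  by_cases h2 : 2 ≤ nbrSum T₁ (fun v => f (.inl v)) r₁
  · exact .inl (compGraph.isIR2DF_restrict_inl_of_two_le hf h2)
  · have hroot : nbrSum T₁ (fun v => f (.inl v)) r₁ = 1 := by
      have hdom := hf.1.2 _ h0
      rw [compGraph.nbrSum_inl_root, h1] at hdom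
      omega
    refine .inr ⟨fun hT₁ => h2 (hT₁.1.2 r₁ h0), ?_, compGraph.isIR2DF_restrict_delVert hf h0⟩
    rw [closedNbrSum, h0, hroot]

theorem stmt_8 {V₁ V₂ : Type*} [Fintype V₁] [Fintype V₂] [DecidableEq V₁] [DecidableEq V₂]
    (T₁ : SimpleGraph V₁) (T₂ : SimpleGraph V₂) (hT₁ : T₁.IsTree) (hT₂ : T₂.IsTree)
    (r₁ : V₁) (r₂ : V₂)
    (f : V₁ ⊕ V₂ → ℕ) (hf : IsIR2DF (compGraph T₁ T₂ r₁ r₂) f)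
    (h0 : f (Sum.inl r₁) = 0) (h1 : f (Sum.inr r₂) = 1) :
    IsIR2DF T₂ (fun v => f (Sum.inr v)) ∧
      (IsIR2DF T₁ (fun v => f (Sum.inl v)) ∨
        (¬ IsIR2DF T₁ (fun v => f (Sum.inl v)) ∧
          closedNbrSum T₁ (fun v => f (Sum.inl v)) r₁ = 1 ∧
          IsIR2DF (delVert T₁ r₁) (fun v => f (Sum.inl v.1)))) :=
  stmt_8_general T₁ T₂ r₁ r₂ f hf h0 h1
end

section
/- Let G be a connected block graph that is not complete, T_G its block-cutpoint tree, and f an R2DF of G satisfying the normalization of Lemma 8. If v is a cut-vertex of G with f(v) = 0, then in T_G, with f_* the induced function, either there exists u ∈ N²_{T_G}(v) with f_*(u) = 2, or there exist two distinct vertices u₁, u₂ ∈ N²_{T_G}(v) with f_*(u₁) = f_*(u₂) = 1. -/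
open scoped Classical

open Finset

/-- `v` is a cut-vertex: deleting it disconnects the graph. -/
def IsCutVertex {V : Type*} (G : SimpleGraph V) (v : V) : Prop :=
  ¬ (SimpleGraph.induce {u : V | u ≠ v} G).Preconnected

/-- A graph with no cut-vertex. -/
def HasNoCutVertex {V : Type*} (G : SimpleGraph V) : Prop :=
  ∀ v, ¬ IsCutVertex G v

/-- `B` is a block of `G`: a maximal set inducing a connected subgraph without cut-vertices. -/
def IsBlock {V : Type*} (G : SimpleGraph V) (B : Set V) : Prop :=
  B.Nonempty ∧ (SimpleGraph.induce B G).Connected ∧ HasNoCutVertex (SimpleGraph.induce B G) ∧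
    ∀ B' : Set V, B ⊆ B' → (SimpleGraph.induce B' G).Connected →
      HasNoCutVertex (SimpleGraph.induce B' G) → B' = B

/-- The set of cut-vertices of `G` lying in `B`. -/
def cutSet {V : Type*} (G : SimpleGraph V) (B : Set V) : Set V :=
  {v ∈ B | IsCutVertex G v}

/-- `G` is a block graph: every block is a clique. -/
def IsBlockGraph {V : Type*} (G : SimpleGraph V) : Prop :=
  ∀ B : Set V, IsBlock G B → G.IsClique B

/-- Vertices of the block-cutpoint tree: cut-vertices plus one vertex per block. -/
abbrev BCVert {V : Type*} (G : SimpleGraph V) : Type _ :=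
  {v : V // IsCutVertex G v} ⊕ {B : Set V // IsBlock G B}

/-- Relation generating the block-cutpoint tree: a cut-vertex is joined to each block containing it. -/
def bcRel {V : Type*} (G : SimpleGraph V) : BCVert G → BCVert G → Prop
  | .inl v, .inr B => v.1 ∈ B.1
  | _, _ => False

/-- The block-cutpoint tree of `G`. -/
def bcGraph {V : Type*} (G : SimpleGraph V) : SimpleGraph (BCVert G) :=
  SimpleGraph.fromRel (bcRel G)

/-- The induced function `f⋆` on the block-cutpoint tree: the value of `f` at cut-vertices,
and `f(H) - f(I)` (the sum of `f` over non-cut-vertices of `H`) at block-vertices. -/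
noncomputable def fstar {V : Type*} [Fintype V] (G : SimpleGraph V) (f : V → ℕ) :
    BCVert G → ℕ
  | .inl v => f v.1
  | .inr B => ∑ v ∈ B.1.toFinset.filter (fun v => ¬ IsCutVertex G v), f v

/-- `y` lies in the closed second neighborhood `N²[x]` of `x`. -/
def InN2 {W : Type*} (H : SimpleGraph W) (x y : W) : Prop :=
  x = y ∨ H.Adj x y ∨ ∃ z, H.Adj x z ∧ H.Adj z y

/-!
Since `f v = 0`, the neighbours of `v` carry total weight at least 2, so one of them has weight 2
or two of them have weight 1. A neighbour `u` with `f u ≠ 0` is represented in `N²[v]` of the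
block-cutpoint tree by a node `w` with `f⋆ w = f u`: by `u` itself if `u` is a cut-vertex, and
otherwise by the block through `vu`, whose only non-cut-vertex is `u` because the normalization
kills the non-cut-vertices of blocks with two or more of them. Distinct neighbours are represented
by distinct nodes, since `w` determines the set `bcSupport G w = {u}` of vertices it accounts for.
-/

namespace SimpleGraph

variable {V : Type*} {G : SimpleGraph V}

lemma hasNoCutVertex_induce_pair (u w : V) : HasNoCutVertex (G.induce {u, w}) := by
  intro a hcut
  have : Subsingleton {x : ({u, w} : Set V) | x ≠ a} := by
    constructor
    rintro ⟨⟨x, hx⟩, hxa⟩ ⟨⟨y, hy⟩, hya⟩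
    simp only [Set.mem_ofPred_eq, ne_eq, Subtype.ext_iff] at hxa hya
    obtain ⟨a, ha⟩ := a
    simp only [Set.mem_insert_iff, Set.mem_singleton_iff] at hx hy ha
    ext
    rcases ha with rfl | rfl <;> rcases hx with rfl | rfl <;> rcases hy with rfl | rfl <;>
      simp_all
  exact hcut .of_subsingleton

lemma exists_isBlock_of_adj [Finite V] {u w : V} (h : G.Adj u w) :
    ∃ B : Set V, IsBlock G B ∧ u ∈ B ∧ w ∈ B := by
  let P : Set V → Prop := fun B =>
    {u, w} ⊆ B ∧ (G.induce B).Connected ∧ HasNoCutVertex (G.induce B)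
  obtain ⟨B, -, ⟨hsub, hconn, hnocut⟩, hmax⟩ := Finite.exists_le_maximal (p := P)
    ⟨subset_rfl, induce_pair_connected_of_adj h, hasNoCutVertex_induce_pair u w⟩
  refine ⟨B, ⟨⟨u, hsub (by simp)⟩, hconn, hnocut, fun B' hBB' hconn' hnocut' => ?_⟩,
    hsub (by simp), hsub (by simp)⟩
  exact (hmax ⟨hsub.trans hBB', hconn', hnocut'⟩ hBB').antisymm hBB'

end SimpleGraph

lemma Finset.exists_eq_two_or_exists_ne_eq_one {α : Type*} {s : Finset α} {f : α → ℕ}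
    (hle : ∀ a ∈ s, f a ≤ 2) (hsum : 2 ≤ ∑ a ∈ s, f a) :
    (∃ a ∈ s, f a = 2) ∨ ∃ a ∈ s, ∃ b ∈ s, a ≠ b ∧ f a = 1 ∧ f b = 1 := by
  refine or_iff_not_imp_left.2 fun h2 => ?_
  push Not at h2
  have hcard : 1 < #(s.filter (f · = 1)) := calc
    1 < ∑ a ∈ s, f a := hsum
    _ ≤ ∑ a ∈ s, if f a = 1 then 1 else 0 :=
      sum_le_sum fun a ha => by have := hle a ha; have := h2 a ha; split_ifs <;> omega
    _ = #(s.filter (f · = 1)) := (card_filter _ _).symm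
  obtain ⟨a, ha, b, hb, hab⟩ := one_lt_card.1 hcard
  rw [mem_filter] at ha hb
  exact ⟨a, ha.1, b, hb.1, hab, ha.2, hb.2⟩

section BlockCutpointTree

variable {V : Type*} {G : SimpleGraph V}

lemma bcGraph_adj_inl_inr {v : V} (hv : IsCutVertex G v) {B : Set V} (hB : IsBlock G B)
    (hvB : v ∈ B) : (bcGraph G).Adj (.inl ⟨v, hv⟩) (.inr ⟨B, hB⟩) := by
  simp [bcGraph, bcRel, hvB]

variable [Fintype V]

noncomputable def bcSupport (G : SimpleGraph V) : BCVert G → Finset V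
  | .inl v => {v.1}
  | .inr B => B.1.toFinset.filter (fun v => ¬ IsCutVertex G v)

lemma fstar_eq_sum_bcSupport (f : V → ℕ) (w : BCVert G) :
    fstar G f w = ∑ x ∈ bcSupport G w, f x := by
  cases w <;> simp [fstar, bcSupport]

lemma ncard_cutSet_lt {B : Set V} {u : V} (huB : u ∈ B) (hu : ¬ IsCutVertex G u) :
    (cutSet G B).ncard < B.ncard :=
  Set.ncard_lt_ncard ⟨Set.sep_subset _ _, fun h => hu (h huB).2⟩

lemma filter_not_isCutVertex_eq_singleton {B : Set V} {u : V}
    (hcard : B.ncard = (cutSet G B).ncard + 1) (huB : u ∈ B) (hu : ¬ IsCutVertex G u) :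
    B.toFinset.filter (fun z => ¬ IsCutVertex G z) = {u} := by
  have hdiff : (B.toFinset.filter (fun z => ¬ IsCutVertex G z) : Set V) = B \ cutSet G B := by
    ext x
    simp [cutSet]
  have hcard' : #(B.toFinset.filter (fun z => ¬ IsCutVertex G z)) = 1 := by
    rw [← Set.ncard_coe_finset, hdiff,
      Set.ncard_sdiff (show cutSet G B ⊆ B from Set.sep_subset _ _)]
    omega
  obtain ⟨a, ha⟩ := card_eq_one.1 hcard'
  have hu' : u ∈ B.toFinset.filter (fun z => ¬ IsCutVertex G z) := by simp [huB, hu]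
  rw [ha, mem_singleton] at hu'
  rw [ha, hu']

lemma ncard_eq_ncard_cutSet_add_one {f : V → ℕ}
    (hnorm2 : ∀ B : Set V, IsBlock G B → (cutSet G B).ncard + 2 ≤ B.ncard →
      ∀ v ∈ B, ¬ IsCutVertex G v → f v = 0)
    {B : Set V} (hB : IsBlock G B) {u : V} (huB : u ∈ B) (hu : ¬ IsCutVertex G u)
    (hfu : f u ≠ 0) : B.ncard = (cutSet G B).ncard + 1 := by
  have := ncard_cutSet_lt huB hu
  by_contra
  exact hfu (hnorm2 B hB (by omega) u huB hu)

lemma exists_inN2_bcSupport_eq_singleton {f : V → ℕ}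
    (hnorm2 : ∀ B : Set V, IsBlock G B → (cutSet G B).ncard + 2 ≤ B.ncard →
      ∀ v ∈ B, ¬ IsCutVertex G v → f v = 0)
    {v u : V} (hv : IsCutVertex G v) (hadj : G.Adj v u) (hfu : f u ≠ 0) :
    ∃ w, InN2 (bcGraph G) (.inl ⟨v, hv⟩) w ∧ bcSupport G w = {u} := by
  obtain ⟨B, hB, hvB, huB⟩ := SimpleGraph.exists_isBlock_of_adj hadj
  by_cases hu : IsCutVertex G u
  · exact ⟨.inl ⟨u, hu⟩, .inr <| .inr ⟨.inr ⟨B, hB⟩, bcGraph_adj_inl_inr hv hB hvB,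
      (bcGraph_adj_inl_inr hu hB huB).symm⟩, rfl⟩
  · exact ⟨.inr ⟨B, hB⟩, .inr <| .inl <| bcGraph_adj_inl_inr hv hB hvB,
      filter_not_isCutVertex_eq_singleton
        (ncard_eq_ncard_cutSet_add_one hnorm2 hB huB hu hfu) huB hu⟩

end BlockCutpointTree

theorem stmt_13_general {V : Type*} [Fintype V] (G : SimpleGraph V)
    (f : V → ℕ) (hf : IsR2DF G f)
    (hnorm2 : ∀ B : Set V, IsBlock G B → (cutSet G B).ncard + 2 ≤ B.ncard →
      ∀ v ∈ B, ¬ IsCutVertex G v → f v = 0)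
    (v : V) (hv : IsCutVertex G v) (hv0 : f v = 0) :
    (∃ u : BCVert G, InN2 (bcGraph G) (Sum.inl ⟨v, hv⟩) u ∧ fstar G f u = 2) ∨
    (∃ u₁ u₂ : BCVert G, u₁ ≠ u₂ ∧
      InN2 (bcGraph G) (Sum.inl ⟨v, hv⟩) u₁ ∧ InN2 (bcGraph G) (Sum.inl ⟨v, hv⟩) u₂ ∧
      fstar G f u₁ = 1 ∧ fstar G f u₂ = 1) := by
  have hwitness : ∀ u, G.Adj v u → f u ≠ 0 → ∃ w, InN2 (bcGraph G) (.inl ⟨v, hv⟩) w ∧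
      bcSupport G w = {u} ∧ fstar G f w = f u := fun u hadj hfu => by
    obtain ⟨w, hw, hsupp⟩ := exists_inN2_bcSupport_eq_singleton hnorm2 hv hadj hfu
    exact ⟨w, hw, hsupp, by rw [fstar_eq_sum_bcSupport, hsupp, sum_singleton]⟩
  rcases exists_eq_two_or_exists_ne_eq_one (fun u _ => hf.1 u) (hf.2 v hv0) with
    ⟨u, hu, hfu⟩ | ⟨u₁, hu₁, u₂, hu₂, hne, hfu₁, hfu₂⟩
  · obtain ⟨w, hw, -, hfw⟩ := hwitness u (mem_filter.1 hu).2 (by omega)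
    exact .inl ⟨w, hw, hfw.trans hfu⟩
  · obtain ⟨w₁, hw₁, hsupp₁, hfw₁⟩ := hwitness u₁ (mem_filter.1 hu₁).2 (by omega)
    obtain ⟨w₂, hw₂, hsupp₂, hfw₂⟩ := hwitness u₂ (mem_filter.1 hu₂).2 (by omega)
    refine .inr ⟨w₁, w₂, ?_, hw₁, hw₂, hfw₁.trans hfu₁, hfw₂.trans hfu₂⟩
    rintro rfl
    exact hne (singleton_injective (hsupp₁.symm.trans hsupp₂))

theorem stmt_13 {V : Type*} [Fintype V] (G : SimpleGraph V)
    (hconn : G.Connected) (hbg : IsBlockGraph G)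
    (hnc : ∃ a b : V, a ≠ b ∧ ¬ G.Adj a b)
    (f : V → ℕ) (hf : IsR2DF G f)
    (hnorm1 : ∀ B : Set V, IsBlock G B → B.ncard = (cutSet G B).ncard + 1 →
      ∀ v ∈ B, ¬ IsCutVertex G v → f v ≤ 1)
    (hnorm2 : ∀ B : Set V, IsBlock G B → (cutSet G B).ncard + 2 ≤ B.ncard →
      ∀ v ∈ B, ¬ IsCutVertex G v → f v = 0)
    (v : V) (hv : IsCutVertex G v) (hv0 : f v = 0) :
    (∃ u : BCVert G, InN2 (bcGraph G) (Sum.inl ⟨v, hv⟩) u ∧ fstar G f u = 2) ∨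
    (∃ u₁ u₂ : BCVert G, u₁ ≠ u₂ ∧
      InN2 (bcGraph G) (Sum.inl ⟨v, hv⟩) u₁ ∧ InN2 (bcGraph G) (Sum.inl ⟨v, hv⟩) u₂ ∧
      fstar G f u₁ = 1 ∧ fstar G f u₂ = 1) :=
  stmt_13_general G f hf hnorm2 v hv hv0
end
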